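/- For every N ∈ ℕ, the intertwining relation L_N Λ_N = Λ_N L_{N+1} holds: for every function f : {0,…,N+1} → ℝ and every x ∈ {0,…,N}, L_N[Λ_N[f]](x) = Λ_N[L_{N+1}[f]](x). -/
import Mathlib


/-- The Ehrenfest generator `L_N` acting on functions:
`L_N[f](x) = ((N-x)/2)(f(x+1)-f(x)) + (x/2)(f(x-1)-f(x))`. -/
noncomputable def ehrenfest (N : ℕ) (f : ℕ → ℝ) (x : ℕ) : ℝ :=
  (((N : ℝ) - (x : ℝ)) / 2) * (f (x + 1) - f x) + ((x : ℝ) / 2) * (f (x - 1) - f x)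

/-- The intertwining relation `L_N Λ_N = Λ_N L_{N+1}`, where
`Λ_N[f](x) = (f(x) + f(x+1))/2`. -/
theorem ehrenfest_intertwining_step (N : ℕ) (f : ℕ → ℝ) (x : ℕ) (hx : x ≤ N) :
    ehrenfest N (fun u => (f u + f (u + 1)) / 2) x =
      (ehrenfest (N + 1) f x + ehrenfest (N + 1) f (x + 1)) / 2 := by
  cases x with
  | zero => simp only [ehrenfest]; norm_num; ring
  | succ n =>
    simp only [ehrenfest, Nat.add_sub_cancel]
    push_cast
    ring
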